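/- arXiv:1607.08453 — 3 statements merged into one kernel-verified Lean document; each statement's English description precedes it below -/
import Mathlib

section
/- If f is a b-homomorphism from H to F, then the map g defined by g((u,v)) = (u, f(v)) is a b-homomorphism from the Cartesian product G □ H to G □ F. -/
/-- Cartesian (box) product of simple graphs. -/
def cartProd {α β : Type*} (G : SimpleGraph α) (H : SimpleGraph β) : SimpleGraph (α × β) where
  Adj a b := (a.1 = b.1 ∧ H.Adj a.2 b.2) ∨ (G.Adj a.1 b.1 ∧ a.2 = b.2)
  symm := ⟨by
    rintro a b (⟨h1, h2⟩ | ⟨h1, h2⟩)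
    · exact Or.inl ⟨h1.symm, h2.symm⟩
    · exact Or.inr ⟨h1.symm, h2.symm⟩⟩
  loopless := ⟨by rintro a (⟨-, h⟩ | ⟨h, -⟩) <;> exact h.ne rfl⟩

/-- A graph homomorphism as a property of a map. -/
def IsHom {α β : Type*} (G : SimpleGraph α) (H : SimpleGraph β) (f : α → β) : Prop :=
  ∀ ⦃a b⦄, G.Adj a b → H.Adj (f a) (f b)

/-- A b-homomorphism. -/
def IsBHom {α β : Type*} (G : SimpleGraph α) (H : SimpleGraph β) (f : α → β) : Prop :=
  IsHom G H f ∧ ∀ u : β, ∃ u', f u' = u ∧ f '' (G.neighborSet u') = H.neighborSet u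

section CartProd

variable {α β γ : Type*} (G : SimpleGraph α) {H : SimpleGraph β} {F : SimpleGraph γ}

@[simp]
theorem cartProd_adj {x y : α × β} :
    (cartProd G H).Adj x y ↔ (x.1 = y.1 ∧ H.Adj x.2 y.2) ∨ (G.Adj x.1 y.1 ∧ x.2 = y.2) :=
  Iff.rfl

theorem cartProd_neighborSet (a : α) (v : β) :
    (cartProd G H).neighborSet (a, v) = {a} ×ˢ H.neighborSet v ∪ G.neighborSet a ×ˢ {v} := by
  ext ⟨b, w⟩
  simp only [SimpleGraph.mem_neighborSet, cartProd_adj, Set.mem_union, Set.mem_prod,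
    Set.mem_singleton_iff]
  grind

theorem image_cartProd_neighborSet (f : β → γ) (a : α) (v : β) :
    (fun x : α × β => (x.1, f x.2)) '' (cartProd G H).neighborSet (a, v)
      = {a} ×ˢ (f '' H.neighborSet v) ∪ G.neighborSet a ×ˢ {f v} := by
  rw [cartProd_neighborSet, Set.image_union, ← Set.image_id ({a} : Set α),
    ← Set.image_id (G.neighborSet a), ← Set.image_singleton (f := f),
    Set.prod_image_image_eq, Set.prod_image_image_eq, Set.image_id, Set.image_id]
  rfl

theorem IsHom.cartProd_right {f : β → γ} (hf : IsHom H F f) :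
    IsHom (cartProd G H) (cartProd G F) (fun x => (x.1, f x.2)) := by
  rintro ⟨a, v⟩ ⟨b, w⟩ (⟨rfl, hvw⟩ | ⟨hab, rfl⟩)
  · exact Or.inl ⟨rfl, hf hvw⟩
  · exact Or.inr ⟨hab, rfl⟩

end CartProd

theorem stmt5 {α β γ : Type*} (G : SimpleGraph α) (H : SimpleGraph β) (F : SimpleGraph γ)
    (f : β → γ) (hf : IsBHom H F f) :
    IsBHom (cartProd G H) (cartProd G F) (fun x => (x.1, f x.2)) := by
  obtain ⟨hhom, hsurj⟩ := hf
  refine ⟨hhom.cartProd_right G, fun ⟨a, c⟩ => ?_⟩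
  obtain ⟨v, rfl, hN⟩ := hsurj c
  exact ⟨(a, v), rfl, by rw [image_cartProd_neighborSet, hN, cartProd_neighborSet]⟩
end

section
/- If f is a surjective domatic homomorphism from H to F, then the map g defined by g((u,v)) = (u, f(v)) is a surjective domatic homomorphism from the direct product G × H to G × F. -/
/-- Direct (tensor) product of simple graphs. -/
def tensorProd {α β : Type*} (G : SimpleGraph α) (H : SimpleGraph β) : SimpleGraph (α × β) where
  Adj a b := G.Adj a.1 b.1 ∧ H.Adj a.2 b.2
  symm := by constructor; rintro a b ⟨h1, h2⟩; exact ⟨h1.symm, h2.symm⟩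
  loopless := by constructor; rintro a ⟨h, -⟩; exact h.ne rfl

/-- A domatic homomorphism. -/
def IsDomatic {α β : Type*} (G : SimpleGraph α) (H : SimpleGraph β) (f : α → β) : Prop :=
  ∀ ⦃u' v'⦄, H.Adj u' v' → ∀ u, f u = u' → ∃ v, f v = v' ∧ G.Adj u v

theorem IsDomatic.id {α : Type*} (G : SimpleGraph α) : IsDomatic G G id := by
  rintro _ v' hadj u rfl
  exact ⟨v', rfl, hadj⟩

theorem IsDomatic.prodMap {α α' β β' : Type*} {G : SimpleGraph α} {G' : SimpleGraph α'}
    {H : SimpleGraph β} {H' : SimpleGraph β'} {g : α → α'} {f : β → β'}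
    (hg : IsDomatic G G' g) (hf : IsDomatic H H' f) :
    IsDomatic (tensorProd G H) (tensorProd G' H') (Prod.map g f) := by
  rintro ⟨a₁, b₁⟩ ⟨a₂, b₂⟩ ⟨hG', hH'⟩ ⟨a, b⟩ hab
  obtain ⟨ha, hb⟩ := Prod.mk.inj hab
  obtain ⟨a', rfl, hG⟩ := hg hG' a ha
  obtain ⟨b', rfl, hH⟩ := hf hH' b hb
  exact ⟨(a', b'), rfl, hG, hH⟩

theorem stmt8 {α β γ : Type*} (G : SimpleGraph α) (H : SimpleGraph β) (F : SimpleGraph γ)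
    (f : β → γ) (hf : IsDomatic H F f) (hsurj : Function.Surjective f) :
    IsDomatic (tensorProd G H) (tensorProd G F) (fun x => (x.1, f x.2)) ∧
      Function.Surjective (fun x : α × β => (x.1, f x.2)) :=
  ⟨(IsDomatic.id G).prodMap hf, Function.surjective_id.prodMap hsurj⟩
end

section
/- For positive integers p ≤ q, the Cartesian product K_p □ K_q admits a fall-coloring with q colors. -/
/-- A fall-coloring with `k` colors: a proper coloring in which every vertex is a b-vertex. -/
def IsFallColoring {α : Type*} (G : SimpleGraph α) (k : ℕ) (f : α → Fin k) : Prop :=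
  (∀ ⦃a b⦄, G.Adj a b → f a ≠ f b) ∧
  ∀ a : α, ∀ c : Fin k, c ≠ f a → ∃ b, G.Adj a b ∧ f b = c

/-! Colour the vertex `(i, j)` of `K_p □ K_q` by `i + j mod q`. This is a `p × q` Latin rectangle:
each row uses every colour exactly once, so a vertex sees all other colours inside its own copy of
`K_q`, and the colours in a column are distinct, so the colouring is also proper across copies. -/

open Function

theorem isFallColoring_cartProd_top_of_latin {α β : Type*} {k : ℕ} (f : α × β → Fin k)
    (hrow : ∀ a, Bijective fun b => f (a, b)) (hcol : ∀ b, Injective fun a => f (a, b)) :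
    IsFallColoring (cartProd (⊤ : SimpleGraph α) (⊤ : SimpleGraph β)) k f := by
  refine ⟨?_, ?_⟩
  · rintro ⟨a, b⟩ ⟨a', b'⟩ (⟨rfl, hb⟩ | ⟨ha, rfl⟩) hf
    · exact hb ((hrow a).injective hf)
    · exact ha (hcol b hf)
  · rintro ⟨a, b⟩ c hc
    obtain ⟨b', rfl⟩ := (hrow a).surjective c
    exact ⟨(a, b'), Or.inl ⟨rfl, fun hb => hc (congrArg (fun b => f (a, b)) hb.symm)⟩, rfl⟩

theorem stmt13_general (p q : ℕ) (hpq : p ≤ q) :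
    ∃ f : Fin p × Fin q → Fin q,
      IsFallColoring (cartProd (⊤ : SimpleGraph (Fin p)) (⊤ : SimpleGraph (Fin q))) q f :=
  ⟨_, isFallColoring_cartProd_top_of_latin (fun x => Fin.castLE hpq x.1 + x.2)
      (fun i => Finite.injective_iff_bijective.mp (add_right_injective (Fin.castLE hpq i)))
      (fun j => (add_left_injective j).comp (Fin.castLE_injective hpq))⟩

theorem stmt13 (p q : ℕ) (hp : 0 < p) (hpq : p ≤ q) :
    ∃ f : Fin p × Fin q → Fin q,
      IsFallColoring (cartProd (⊤ : SimpleGraph (Fin p)) (⊤ : SimpleGraph (Fin q))) q f :=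
  stmt13_general p q hpq
end
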